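/- Let T be a finite tree rooted at an internal vertex r, whose leaves are enumerated without repetition as c_0, …, c_{k−1} (k ≥ 3). Suppose that for every internal vertex u of T, L^r(u) is cyclically consecutive. Then there exist an index i ∈ {0,…,k−1} and a vertex x such that every vertex of the path in T from c_i to c_{(i+1) mod k} other than c_i, c_{(i+1) mod k} and x has degree 2 in T. -/

import Mathlib

open SimpleGraph Set Function

/-!
Root the tree at `r` and let `b` be a vertex of degree at least `3` as far from `r` as possible;
it exists because in a tree with no degree above `2` the degree sum `2(n - 1)` leaves room for
at most two leaves. Every proper descendant of `b` then has degree at most `2`. Two distinct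
children of `b` lead to two distinct leaves below `b`, so the cyclically consecutive set `L^r(b)`
contains two consecutive leaves `c_i` and `c_{i+1}`. The path between them stays below `b`, so
all its inner vertices except `b` have degree exactly `2`.

Ancestry is handled through distances: in a tree, `u` lies on the path from `r` to `v` iff
`dist r u + dist u v = dist r v`.
-/

/-- `u` is an ancestor of `v` with respect to root `r`:
`u` lies on the unique path in `T` from `r` to `v`. -/
def IsAncestor {V : Type*} (T : SimpleGraph V) (r u v : V) : Prop :=
  ∀ p : T.Walk r v, p.IsPath → u ∈ p.support

/-- `u` is the parent of `v` with respect to root `r`. -/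
def IsParent {V : Type*} (T : SimpleGraph V) (r u v : V) : Prop :=
  IsAncestor T r u v ∧ u ≠ v ∧ T.Adj u v

/-- `L^r(u)`: the set of leaves of `T` that are descendants of `u`. -/
def LeafSet {V : Type*} (T : SimpleGraph V) [Fintype V] [DecidableRel T.Adj] (r u : V) :
    Set V :=
  {c | T.degree c = 1 ∧ IsAncestor T r u c}

/-- The leaf `c_{j mod k}` index. -/
def cidx {k : ℕ} (hk : 0 < k) (j : ℕ) : Fin k := ⟨j % k, Nat.mod_lt _ hk⟩

/-- A set `A` of leaves is cyclically consecutive with respect to the enumeration `c`. -/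
def CycConsec {V : Type*} {k : ℕ} (hk : 0 < k) (c : Fin k → V) (A : Set V) : Prop :=
  ∃ j m : ℕ, A = {x | ∃ t ≤ m, x = c (cidx hk (j + t))}

namespace SimpleGraph

variable {V : Type*} {G : SimpleGraph V} {r u v w x y b : V}

theorem Walk.IsPath.two_le_degree_of_mem_support [Fintype (G.neighborSet w)] {p : G.Walk u v}
    (hp : p.IsPath) (hw : w ∈ p.support) (hwu : w ≠ u) (hwv : w ≠ v) :
    2 ≤ G.degree w := by
  obtain ⟨n, rfl, hn⟩ := Walk.mem_support_iff_exists_getVert.mp hw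
  have h0 : n ≠ 0 := by rintro rfl; exact hwu p.getVert_zero
  have hlen : n ≠ p.length := by rintro rfl; exact hwv p.getVert_length
  rw [← card_neighborFinset_eq_degree, Nat.succ_le_iff, Finset.one_lt_card]
  refine ⟨p.getVert (n - 1), ?_, p.getVert (n + 1), ?_, fun h => ?_⟩
  · have := p.adj_getVert_succ (i := n - 1) (by omega)
    rw [Nat.sub_add_cancel (by omega)] at this
    exact (mem_neighborFinset _ _ _).mpr this.symm
  · exact (mem_neighborFinset _ _ _).mpr (p.adj_getVert_succ (by omega))
  · have := hp.getVert_injOn (by simp only [Set.mem_ofPred_eq]; omega)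
      (by simp only [Set.mem_ofPred_eq]; omega) h
    omega

theorem IsTree.exists_three_le_degree [Fintype V] [DecidableRel G.Adj] (hT : G.IsTree)
    (h : 3 ≤ (Finset.univ.filter fun v => G.degree v = 1).card) : ∃ v, 3 ≤ G.degree v := by
  by_contra! hlt
  have hle : ∑ v, (G.degree v + if G.degree v = 1 then 1 else 0) ≤ ∑ _v : V, 2 :=
    Finset.sum_le_sum fun v _ => by have := hlt v; split_ifs <;> omega
  rw [Finset.sum_add_distrib, G.sum_degrees_eq_twice_card_edges, ← Finset.card_filter,
    Finset.sum_const, Finset.card_univ, smul_eq_mul] at hle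
  have := hT.card_edgeFinset
  omega

theorem IsTree.length_eq_dist (hT : G.IsTree) {p : G.Walk u v} (hp : p.IsPath) :
    p.length = G.dist u v := by
  obtain ⟨q, hq, hlen⟩ := hT.connected.exists_path_of_dist u v
  rw [(hT.existsUnique_path u v).unique hp hq, hlen]

theorem IsTree.dist_add_dist_of_mem_support (hT : G.IsTree) {p : G.Walk u v}
    (hp : p.IsPath) (hw : w ∈ p.support) : G.dist u w + G.dist w v = G.dist u v := by
  classical
  have h := congrArg Walk.length (p.take_spec hw)
  rwa [Walk.length_append, hT.length_eq_dist (hp.takeUntil hw),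
    hT.length_eq_dist (hp.dropUntil hw), hT.length_eq_dist hp] at h

theorem IsTree.mem_support_of_dist_add_dist (hT : G.IsTree) {p : G.Walk u v}
    (hp : p.IsPath) (h : G.dist u w + G.dist w v = G.dist u v) : w ∈ p.support := by
  obtain ⟨q₁, hq₁⟩ := hT.connected.exists_walk_length_eq_dist u w
  obtain ⟨q₂, hq₂⟩ := hT.connected.exists_walk_length_eq_dist w v
  have hq : (q₁.append q₂).IsPath :=
    Walk.isPath_of_length_eq_dist _ (by rw [Walk.length_append]; omega)
  rw [(hT.existsUnique_path u v).unique hp hq, Walk.mem_support_append_iff]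
  exact Or.inl q₁.end_mem_support

theorem IsTree.isAncestor_iff (hT : G.IsTree) :
    IsAncestor G r u v ↔ G.dist r u + G.dist u v = G.dist r v := by
  refine ⟨fun h => ?_, fun h p hp => hT.mem_support_of_dist_add_dist hp h⟩
  obtain ⟨p, hp, -⟩ := hT.connected.exists_path_of_dist r v
  exact hT.dist_add_dist_of_mem_support hp (h p hp)

theorem IsTree.isAncestor_refl (hT : G.IsTree) : IsAncestor G r v v := by
  simp [hT.isAncestor_iff]

theorem IsTree.isAncestor_of_adj (hT : G.IsTree) (huv : G.Adj u v)
    (h : G.dist r v = G.dist r u + 1) : IsAncestor G r u v := by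
  rw [hT.isAncestor_iff, dist_eq_one_iff_adj.mpr huv, h]

theorem IsTree.isAncestor_trans (hT : G.IsTree) (huv : IsAncestor G r u v)
    (hvw : IsAncestor G r v w) : IsAncestor G r u w := by
  rw [hT.isAncestor_iff] at *
  have := hT.connected.dist_triangle (u := u) (v := v) (w := w)
  have := hT.connected.dist_triangle (u := r) (v := u) (w := w)
  omega

theorem IsTree.dist_lt_of_isAncestor (hT : G.IsTree) (h : IsAncestor G r u v) (huv : u ≠ v) :
    G.dist r u < G.dist r v := by
  have := hT.connected.pos_dist_of_ne huv
  have := hT.isAncestor_iff.mp h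
  omega

theorem IsTree.eq_of_isAncestor_of_dist_eq (hT : G.IsTree) (hu : IsAncestor G r u x)
    (hv : IsAncestor G r v x) (h : G.dist r u = G.dist r v) : u = v := by
  classical
  obtain ⟨p, hp, -⟩ := hT.connected.exists_path_of_dist r x
  have hgetVert : ∀ w (hw : w ∈ p.support), p.getVert (G.dist r w) = w := fun w hw => by
    rw [← hT.length_eq_dist (hp.takeUntil hw)]
    exact p.getVert_length_takeUntil hw
  rw [← hgetVert u (hu p hp), ← hgetVert v (hv p hp), h]

theorem IsTree.eq_of_adj_of_dist_eq_add_one (hT : G.IsTree) (hux : G.Adj u x) (hvx : G.Adj v x)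
    (hu : G.dist r x = G.dist r u + 1) (hv : G.dist r x = G.dist r v + 1) : u = v :=
  hT.eq_of_isAncestor_of_dist_eq (hT.isAncestor_of_adj hux hu) (hT.isAncestor_of_adj hvx hv)
    (by omega)

theorem IsTree.isAncestor_of_mem_support (hT : G.IsTree) (hx : IsAncestor G r b x)
    (hy : IsAncestor G r b y) {p : G.Walk x y} (hp : p.IsPath) (hw : w ∈ p.support) :
    IsAncestor G r b w := by
  classical
  obtain ⟨q₁, hq₁, -⟩ := hT.connected.exists_path_of_dist b x
  obtain ⟨q₂, hq₂, -⟩ := hT.connected.exists_path_of_dist b y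
  have hp' : p = (q₁.reverse.append q₂).bypass :=
    (hT.existsUnique_path x y).unique hp (Walk.bypass_isPath _)
  have hw' := Walk.support_bypass_subset_support _ (hp' ▸ hw)
  rw [Walk.mem_support_append_iff, Walk.support_reverse, List.mem_reverse] at hw'
  rw [hT.isAncestor_iff] at hx hy ⊢
  have := hT.connected.dist_triangle (u := r) (v := w) (w := x)
  have := hT.connected.dist_triangle (u := r) (v := w) (w := y)
  have := hT.connected.dist_triangle (u := r) (v := b) (w := w)
  rcases hw' with h | h
  · have := hT.dist_add_dist_of_mem_support hq₁ h
    omega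
  · have := hT.dist_add_dist_of_mem_support hq₂ h
    omega

/-- A descendant of `v` farthest from the root is a leaf. -/
theorem IsTree.exists_degree_eq_one_isAncestor [Fintype V] [DecidableRel G.Adj]
    (hT : G.IsTree) (hv : v ≠ r) : ∃ x, G.degree x = 1 ∧ IsAncestor G r v x := by
  classical
  obtain ⟨x, hx, hmax⟩ := Finset.exists_max_image (Finset.univ.filter (IsAncestor G r v))
    (G.dist r) ⟨v, by simpa using hT.isAncestor_refl⟩
  simp only [Finset.mem_filter, Finset.mem_univ, true_and] at hx hmax
  have hparent : ∀ y, G.Adj y x → G.dist r x = G.dist r y + 1 := fun y hy => by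
    refine (hT.dist_eq_dist_add_one_of_adj r hy).resolve_left fun hyx => ?_
    have := hmax y (hT.isAncestor_trans hx (hT.isAncestor_of_adj hy.symm hyx))
    omega
  refine ⟨x, le_antisymm ?_ ?_, hx⟩
  · rw [← card_neighborFinset_eq_degree, Finset.card_le_one]
    intro y hy z hz
    rw [mem_neighborFinset] at hy hz
    exact hT.eq_of_adj_of_dist_eq_add_one hy.symm hz.symm (hparent y hy.symm) (hparent z hz.symm)
  · have hxr : x ≠ r := fun hxr => by
      have := hT.dist_lt_of_isAncestor (hxr ▸ hx) hv
      simp at this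
    obtain ⟨p, -, -⟩ := hT.connected.exists_path_of_dist x r
    exact (G.degree_pos_iff_exists_adj x).mpr ⟨_, p.adj_snd (Walk.not_nil_of_ne hxr)⟩

theorem IsTree.exists_two_children [Fintype V] [DecidableRel G.Adj] (hT : G.IsTree)
    (hb : 3 ≤ G.degree b) : ∃ v₁ v₂, v₁ ≠ v₂ ∧ G.Adj b v₁ ∧ G.Adj b v₂ ∧
      G.dist r v₁ = G.dist r b + 1 ∧ G.dist r v₂ = G.dist r b + 1 := by
  classical
  have hparents :
      ((G.neighborFinset b).filter fun u => G.dist r b = G.dist r u + 1).card ≤ 1 := by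
    rw [Finset.card_le_one]
    intro u hu u' hu'
    simp only [Finset.mem_filter, mem_neighborFinset] at hu hu'
    exact hT.eq_of_adj_of_dist_eq_add_one hu.1.symm hu'.1.symm hu.2 hu'.2
  have hchildren :
      1 < ((G.neighborFinset b).filter fun u => ¬ G.dist r b = G.dist r u + 1).card := by
    have := Finset.card_filter_add_card_filter_not (s := G.neighborFinset b)
      (fun u => G.dist r b = G.dist r u + 1)
    rw [card_neighborFinset_eq_degree] at this
    omega
  obtain ⟨v₁, hv₁, v₂, hv₂, hv₁₂⟩ := Finset.one_lt_card.mp hchildren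
  simp only [Finset.mem_filter, mem_neighborFinset] at hv₁ hv₂
  exact ⟨v₁, v₂, hv₁₂, hv₁.1, hv₂.1,
    (hT.dist_eq_dist_add_one_of_adj r hv₁.1).resolve_left hv₁.2,
    (hT.dist_eq_dist_add_one_of_adj r hv₂.1).resolve_left hv₂.2⟩

theorem IsTree.exists_ne_mem_leafSet [Fintype V] [DecidableRel G.Adj] (hT : G.IsTree)
    (hb : 3 ≤ G.degree b) : ∃ x y, x ≠ y ∧ x ∈ LeafSet G r b ∧ y ∈ LeafSet G r b := by
  obtain ⟨v₁, v₂, hv₁₂, hbv₁, hbv₂, hd₁, hd₂⟩ := hT.exists_two_children (r := r) hb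
  have hleaf_below : ∀ v, G.Adj b v → G.dist r v = G.dist r b + 1 →
      ∃ x ∈ LeafSet G r b, IsAncestor G r v x := fun v hbv hd => by
    have hvr : v ≠ r := by rintro rfl; simp at hd
    obtain ⟨x, hx, hvx⟩ := hT.exists_degree_eq_one_isAncestor hvr
    exact ⟨x, ⟨hx, hT.isAncestor_trans (hT.isAncestor_of_adj hbv hd) hvx⟩, hvx⟩
  obtain ⟨x₁, hx₁, hv₁x₁⟩ := hleaf_below v₁ hbv₁ hd₁
  obtain ⟨x₂, hx₂, hv₂x₂⟩ := hleaf_below v₂ hbv₂ hd₂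
  refine ⟨x₁, x₂, fun h => hv₁₂ ?_, hx₁, hx₂⟩
  subst h
  exact hT.eq_of_isAncestor_of_dist_eq hv₁x₁ hv₂x₂ (hd₁.trans hd₂.symm)

end SimpleGraph

theorem cidx_val_add_one {k : ℕ} (hk : 0 < k) (j : ℕ) :
    cidx hk ((cidx hk j : ℕ) + 1) = cidx hk (j + 1) :=
  Fin.ext (Nat.mod_add_mod j k 1)

theorem CycConsec.exists_consecutive {V : Type*} {k : ℕ} {hk : 0 < k} {c : Fin k → V}
    {A : Set V} (hA : CycConsec hk c A) {x y : V} (hx : x ∈ A) (hy : y ∈ A) (hxy : x ≠ y) :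
    ∃ i : Fin k, c i ∈ A ∧ c (cidx hk (i + 1)) ∈ A := by
  obtain ⟨j, m, rfl⟩ := hA
  obtain ⟨s, hs, rfl⟩ := hx
  obtain ⟨t, ht, rfl⟩ := hy
  have hm : 1 ≤ m := by
    by_contra! hm
    obtain rfl : s = 0 := by omega
    obtain rfl : t = 0 := by omega
    exact hxy rfl
  exact ⟨cidx hk j, ⟨0, Nat.zero_le m, rfl⟩, ⟨1, hm, by rw [cidx_val_add_one]⟩⟩

/-- If `T` is rooted at an internal vertex `r` and each `L^r(u)` is
cyclically consecutive, then there is an index `i` and a vertex `x` such that every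
vertex on the path from `c_i` to `c_{(i+1) mod k}` other than the endpoints and `x`
has degree 2 in `T`. -/
theorem stmt3 {V : Type*} [Fintype V] (T : SimpleGraph V) [DecidableRel T.Adj]
    (hT : T.IsTree) {k : ℕ} (hk : 3 ≤ k) (c : Fin k → V)
    (hinj : Function.Injective c)
    (hleaf : ∀ v : V, T.degree v = 1 ↔ ∃ i : Fin k, v = c i)
    (r : V)
    (hcyc : ∀ u : V, 2 ≤ T.degree u → CycConsec (by omega) c (LeafSet T r u)) :
    ∃ (i : Fin k) (x : V),
      ∀ p : T.Walk (c i) (c (cidx (by omega) ((i : ℕ) + 1))), p.IsPath →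
        ∀ w ∈ p.support, w ≠ c i → w ≠ c (cidx (by omega) ((i : ℕ) + 1)) → w ≠ x →
          T.degree w = 2 := by
  classical
  have hleaves : (Finset.univ.filter fun v => T.degree v = 1) = Finset.univ.image c := by
    ext v
    simp [hleaf, eq_comm]
  obtain ⟨b₀, hb₀⟩ := hT.exists_three_le_degree
    (by rwa [hleaves, Finset.card_image_of_injective _ hinj, Finset.card_univ, Fintype.card_fin])
  obtain ⟨b, hb, hbmax⟩ := Finset.exists_max_image (Finset.univ.filter fun v => 3 ≤ T.degree v)
    (T.dist r) ⟨b₀, by simpa using hb₀⟩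
  simp only [Finset.mem_filter, Finset.mem_univ, true_and] at hb hbmax
  obtain ⟨x, y, hxy, hx, hy⟩ := hT.exists_ne_mem_leafSet (r := r) hb
  obtain ⟨i, hi, hi'⟩ := (hcyc b (by omega)).exists_consecutive hx hy hxy
  refine ⟨i, b, fun p hp w hw hwi hwi' hwb =>
    le_antisymm ?_ (hp.two_le_degree_of_mem_support hw hwi hwi')⟩
  have hbw :=
    hT.dist_lt_of_isAncestor (hT.isAncestor_of_mem_support hi.2 hi'.2 hp hw) (Ne.symm hwb)
  by_contra! h
  have := hbmax w h
  omega
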